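/- Let X and Y be finite multisets of positive dyadic rationals and G = Σ_{x∈X} *:x + Σ_{y∈Y} *:(-y). Then in normal play, G + * > 0 if |X| > |Y|, G + * is incomparable with 0 if |X| = |Y|, and G + * < 0 if |X| < |Y|. -/

import Mathlib

/-!
A sprig `*:x` with `x > 0` has the left options `0` and `*:xᴸ` (where `xᴸ ≥ 0` and `*:0 = *`)
and the right options `0` and `*:xᴿ` (where `xᴿ > 0`). Only this shape matters: every follower
of `(X, Y) + *` is again a sum of `p` positive sprigs, `n` negated ones and `s` stars, and
induction over the game shows that Left wins moving second if `p ≥ n + 2`, or `p = n + 1` and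
`p + n + s` is even, or the position is an even number of stars; and that Left wins moving
first if `p ≥ n + 1`, or `p = n` and `p + n + s` is odd. With `s = 1` the three cases of the
theorem follow by applying this to the position and to its negative, in which `p` and `n` are
exchanged.
-/

namespace SetTheory

/-- Pre-games, as `SetTheory.PGame` was in Mathlib (removed since). -/
inductive PGame.{u} : Type (u + 1)
  | mk : ∀ α β : Type u, (α → PGame) → (β → PGame) → PGame

universe u

namespace PGame

def LeftMoves : PGame.{u} → Type u
  | mk l _ _ _ => l

def RightMoves : PGame.{u} → Type u
  | mk _ r _ _ => r

def moveLeft : ∀ g : PGame, LeftMoves g → PGame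
  | mk _ _ L _ => L

def moveRight : ∀ g : PGame, RightMoves g → PGame
  | mk _ _ _ R => R

inductive IsOption : PGame → PGame → Prop
  | moveLeft {x : PGame} (i : x.LeftMoves) : IsOption (x.moveLeft i) x
  | moveRight {x : PGame} (i : x.RightMoves) : IsOption (x.moveRight i) x

def Subsequent : PGame → PGame → Prop :=
  Relation.TransGen IsOption

instance : Zero PGame := ⟨⟨PEmpty, PEmpty, PEmpty.elim, PEmpty.elim⟩⟩

def star : PGame := ⟨PUnit, PUnit, fun _ => 0, fun _ => 0⟩

def neg : PGame → PGame
  | ⟨l, r, L, R⟩ => ⟨r, l, fun i => neg (R i), fun i => neg (L i)⟩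

instance : Neg PGame := ⟨neg⟩

def addAux {xl xr : Type u} (IHL : xl → PGame.{u} → PGame.{u})
    (IHR : xr → PGame.{u} → PGame.{u}) : PGame.{u} → PGame.{u}
  | mk yl yr yL yR =>
    mk (xl ⊕ yl) (xr ⊕ yr)
      (Sum.elim (fun i => IHL i (mk yl yr yL yR)) (fun j => addAux IHL IHR (yL j)))
      (Sum.elim (fun i => IHR i (mk yl yr yL yR)) (fun j => addAux IHL IHR (yR j)))

def add : PGame.{u} → PGame.{u} → PGame.{u}
  | mk _ _ xL xR => addAux (fun i => add (xL i)) (fun i => add (xR i))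

instance : Add PGame := ⟨add⟩

/-- `(leLF x y).1 = (x ≤ y)`, `(leLF x y).2 = (x ⧏ y)`, with
`x ≤ y ↔ (∀ i, xL i ⧏ y) ∧ (∀ j, x ⧏ yR j)` and
`x ⧏ y ↔ (∃ i, x ≤ yL i) ∨ (∃ j, xR j ≤ y)`. -/
noncomputable def leLF (x : PGame) : PGame → Prop × Prop :=
  PGame.rec (motive := fun _ => PGame → Prop × Prop)
    (fun _ _ _ _ IHxL IHxR y =>
      PGame.rec (motive := fun _ => Prop × Prop)
        (fun yl yr yL yR IHyL IHyR =>
          ((∀ i, ((IHxL i) (mk yl yr yL yR)).2) ∧ (∀ j, (IHyR j).2),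
           (∃ i, (IHyL i).1) ∨ (∃ j, ((IHxR j) (mk yl yr yL yR)).1))) y) x

instance : LE PGame := ⟨fun x y => (leLF x y).1⟩

instance : LT PGame := ⟨fun x y => x ≤ y ∧ ¬ y ≤ x⟩

def Fuzzy (x y : PGame) : Prop := ¬ y ≤ x ∧ ¬ x ≤ y

end PGame

end SetTheory

open SetTheory

namespace Sprigs

/-- Partizan games (in the lowest universe). -/
abbrev PG : Type 1 := PGame.{0}

/-- Winning predicates moving first under misère play:
`(mw G).1` = Left wins moving first; `(mw G).2` = Right wins moving first. -/
def mw : PG → Prop × Prop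
  | PGame.mk α β L R =>
    ((IsEmpty α ∨ ∃ i, ¬ (mw (L i)).2), (IsEmpty β ∨ ∃ j, ¬ (mw (R j)).1))

/-- Winning predicates moving first under normal play. -/
def nw : PG → Prop × Prop
  | PGame.mk _ _ L R => ((∃ i, ¬ (nw (L i)).2), (∃ j, ¬ (nw (R j)).1))

/-- Outcome classes. -/
inductive Outcome : Type
  | L | R | N | P
deriving DecidableEq

/-- The outcome determined by "Left wins moving first" and "Right wins moving first". -/
noncomputable def outcomeOf (wl wr : Prop) : Outcome :=
  haveI := Classical.propDecidable wl
  haveI := Classical.propDecidable wr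
  if wl then (if wr then .N else .L) else (if wr then .R else .P)

/-- Misère-play outcome. -/
noncomputable def mo (G : PG) : Outcome := outcomeOf (mw G).1 (mw G).2

/-- Normal-play outcome. -/
noncomputable def no (G : PG) : Outcome := outcomeOf (nw G).1 (nw G).2

/-- Partial order on outcomes: R < P < L and R < N < L, with P, N incomparable. -/
def Outcome.le : Outcome → Outcome → Prop
  | .R, _ => True
  | _, .L => True
  | a, b => a = b

def Outcome.lt (a b : Outcome) : Prop := Outcome.le a b ∧ a ≠ b

/-- Dicot games: every subposition has moves for both players or neither. -/
def Dicot : PG → Prop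
  | PGame.mk α β L R =>
    ((IsEmpty α ∧ IsEmpty β) ∨ (Nonempty α ∧ Nonempty β)) ∧
      (∀ i, Dicot (L i)) ∧ (∀ j, Dicot (R j))

/-- Ordinal sum `G : H`. -/
def ordSum (G : PG) : PG → PGame
  | PGame.mk α β L R =>
    PGame.mk (G.LeftMoves ⊕ α) (G.RightMoves ⊕ β)
      (Sum.elim G.moveLeft (fun a => ordSum G (L a)))
      (Sum.elim G.moveRight (fun b => ordSum G (R b)))

/-- Canonical form of a natural number as a game. -/
def natGame : ℕ → PGame
  | 0 => PGame.mk PEmpty PEmpty PEmpty.elim PEmpty.elim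
  | n + 1 => PGame.mk PUnit PEmpty (fun _ => natGame n) PEmpty.elim

/-- Canonical form of an integer as a game. -/
def intGame (m : ℤ) : PG := if 0 ≤ m then natGame m.toNat else -natGame (-m).toNat

/-- Canonical form of the dyadic rational `m / 2 ^ n` as a game. -/
def dGame : ℕ → ℤ → PGame
  | 0, m => intGame m
  | n + 1, m =>
    if m % 2 = 0 then dGame n (m / 2)
    else PGame.mk PUnit PUnit (fun _ => dGame n ((m - 1) / 2)) (fun _ => dGame n ((m + 1) / 2))

/-- A rational number is dyadic if its denominator is a power of two. -/
def IsDyadic (q : ℚ) : Prop := ∃ n : ℕ, q.den = 2 ^ n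

/-- The canonical-form game of a dyadic rational. -/
def qGame (q : ℚ) : PG := dGame (Nat.log 2 q.den) q.num

/-- The Sprig `* : x` for a dyadic rational `x`. -/
def sprig (q : ℚ) : PG := ordSum PGame.star (qGame q)

/-- The Sprig `* : x̄` where `x̄` is the conjugate of the dyadic rational `x`. -/
def sprigNeg (q : ℚ) : PG := ordSum PGame.star (-qGame q)

/-- Disjunctive sum of a list of games. -/
def listSum (l : List PG) : PG := l.foldr (· + ·) 0

/-- The position `(X, Y) = Σ_{x ∈ X} *:x + Σ_{y ∈ Y} *:(-y)`. -/
def sprigsGame (X Y : List ℚ) : PG := listSum (X.map sprig ++ Y.map sprigNeg)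

/-- The minimum of a nonempty multiset of rationals (0 for the empty multiset). -/
noncomputable def mmin (s : Multiset ℚ) : ℚ :=
  if h : s = 0 then 0 else
    s.toFinset.min' (by rwa [Multiset.toFinset_nonempty])

/-- The edge `ε` computed from the reduced multisets `X' = X \ Y` and `Y' = Y \ X`. -/
noncomputable def edge (X Y : Multiset ℚ) : ℚ :=
  if X - Y = 0 ∨ Y - X = 0 then 0 else mmin (X - Y) - mmin (Y - X)

/-- The universe `S` of finite sums of Sprigs (and `*`). -/
inductive InS : PG → Prop
  | star : InS PGame.star
  | sprig {q : ℚ} (h : IsDyadic q) : InS (sprig q)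
  | sprigNeg {q : ℚ} (h : IsDyadic q) : InS (sprigNeg q)
  | add {a b : PG} : InS a → InS b → InS (a + b)

/-- A universe: a set of games closed under disjunctive sum and followers. -/
def IsUniverse (S : Set PG) : Prop :=
  (∀ a ∈ S, ∀ b ∈ S, a + b ∈ S) ∧ ∀ a ∈ S, ∀ b, PGame.Subsequent b a → b ∈ S

end Sprigs

namespace SetTheory.PGame

universe v

theorem mk_le_mk {xl xr yl yr : Type v} {xL : xl → PGame} {xR : xr → PGame} {yL : yl → PGame}
    {yR : yr → PGame} : mk xl xr xL xR ≤ mk yl yr yL yR ↔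
      (∀ i, (leLF (xL i) (mk yl yr yL yR)).2) ∧ ∀ j, (leLF (mk xl xr xL xR) (yR j)).2 :=
  Iff.rfl

theorem leLF_mk_mk_snd {xl xr yl yr : Type v} {xL : xl → PGame} {xR : xr → PGame}
    {yL : yl → PGame} {yR : yr → PGame} : (leLF (mk xl xr xL xR) (mk yl yr yL yR)).2 ↔
      (∃ i, mk xl xr xL xR ≤ yL i) ∨ ∃ j, xR j ≤ mk yl yr yL yR :=
  Iff.rfl

theorem leLF_snd_iff_not_le_and_swap (x : PGame.{v}) :
    ∀ y, ((leLF x y).2 ↔ ¬ y ≤ x) ∧ ((leLF y x).2 ↔ ¬ x ≤ y) := by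
  induction x with | mk xl xr xL xR ihxL ihxR => ?_
  intro y
  induction y with | mk yl yr yL yR ihyL ihyR => ?_
  simp only [leLF_mk_mk_snd, mk_le_mk, not_and_or, not_forall, (ihyL _).2, (ihxR _ _).2,
    (ihxL _ _).1, (ihyR _).1, not_not, and_self]

theorem le_iff_forall_not_le {x y : PGame.{v}} :
    x ≤ y ↔ (∀ i, ¬ y ≤ x.moveLeft i) ∧ ∀ j, ¬ y.moveRight j ≤ x := by
  cases x; cases y
  simp only [mk_le_mk, (leLF_snd_iff_not_le_and_swap _ _).1]
  rfl

theorem zero_le_iff {x : PGame.{v}} : 0 ≤ x ↔ ∀ j, ¬ x.moveRight j ≤ 0 := by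
  rw [le_iff_forall_not_le]
  exact and_iff_right fun i => PEmpty.elim i

theorem le_zero_iff {x : PGame.{v}} : x ≤ 0 ↔ ∀ i, ¬ 0 ≤ x.moveLeft i := by
  rw [le_iff_forall_not_le]
  exact and_iff_left fun j => PEmpty.elim j

theorem not_le_zero_iff {x : PGame.{v}} : ¬ x ≤ 0 ↔ ∃ i, 0 ≤ x.moveLeft i := by
  simp only [le_zero_iff, not_forall, not_not]

theorem neg_zero : -(0 : PGame.{v}) = 0 := by
  change mk _ _ _ _ = mk _ _ _ _
  congr <;> funext i <;> exact PEmpty.elim i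

theorem neg_neg (x : PGame.{v}) : - -x = x := by
  induction x with
  | mk xl xr xL xR ihL ihR => exact congrArg₂ (mk xl xr) (funext ihL) (funext ihR)

theorem neg_add (x y : PGame.{v}) : -(x + y) = -x + -y := by
  induction x generalizing y with | mk xl xr xL xR ihxL ihxR => ?_
  induction y with | mk yl yr yL yR ihyL ihyR => ?_
  refine congrArg₂ (mk _ _) (funext ?_) (funext ?_)
  · rintro (i | j)
    exacts [ihxR i _, ihyR j]
  · rintro (i | j)
    exacts [ihxL i _, ihyL j]

theorem zero_le_neg_iff_and_neg_le_zero_iff (x : PGame.{v}) :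
    (0 ≤ -x ↔ x ≤ 0) ∧ (-x ≤ 0 ↔ 0 ≤ x) := by
  induction x with | mk xl xr xL xR ihL ihR => ?_
  rw [zero_le_iff, le_zero_iff, le_zero_iff, zero_le_iff]
  exact ⟨forall_congr' fun i => not_congr (ihL i).2, forall_congr' fun j => not_congr (ihR j).1⟩

theorem zero_le_neg_iff {x : PGame.{v}} : 0 ≤ -x ↔ x ≤ 0 :=
  (zero_le_neg_iff_and_neg_le_zero_iff x).1

theorem neg_le_zero_iff {x : PGame.{v}} : -x ≤ 0 ↔ 0 ≤ x :=
  (zero_le_neg_iff_and_neg_le_zero_iff x).2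

theorem exists_moveLeft_add_left {x : PGame.{v}} (y : PGame.{v}) (i : x.LeftMoves) :
    ∃ k, (x + y).moveLeft k = x.moveLeft i + y := by
  cases x; cases y; exact ⟨Sum.inl i, rfl⟩

theorem exists_moveLeft_add_right (x : PGame.{v}) {y : PGame.{v}} (i : y.LeftMoves) :
    ∃ k, (x + y).moveLeft k = x + y.moveLeft i := by
  cases x; cases y; exact ⟨Sum.inr i, rfl⟩

theorem moveRight_add_cases {x y : PGame.{v}} (k : (x + y).RightMoves) :
    (∃ j, (x + y).moveRight k = x.moveRight j + y) ∨
      ∃ j, (x + y).moveRight k = x + y.moveRight j := by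
  cases x; cases y
  rcases k with j | j
  exacts [Or.inl ⟨j, rfl⟩, Or.inr ⟨j, rfl⟩]

end SetTheory.PGame

namespace Sprigs

open PGame

/-- Covers both `*` and `*:0 = ordSum * 0`, which differ as pre-games. -/
def IsStarLike (G : PG) : Prop :=
  Nonempty G.LeftMoves ∧ Nonempty G.RightMoves ∧
    (∀ i, G.moveLeft i = 0) ∧ ∀ j, G.moveRight j = 0

/-- The shape of `*:x` for `x > 0`: left options `0` and `*:xᴸ` with `xᴸ ≥ 0`,
right options `0` and `*:xᴿ` with `xᴿ > 0`. -/
def IsPosSprig : PG → Prop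
  | PGame.mk _ _ L R =>
    (∃ i, L i = 0) ∧ (∃ j, R j = 0) ∧ (∃ i, IsPosSprig (L i) ∨ IsStarLike (L i)) ∧
      (∀ i, L i = 0 ∨ IsPosSprig (L i) ∨ IsStarLike (L i)) ∧ ∀ j, R j = 0 ∨ IsPosSprig (R j)

theorem isPosSprig_iff {G : PG} : IsPosSprig G ↔
    (∃ i, G.moveLeft i = 0) ∧ (∃ j, G.moveRight j = 0) ∧
      (∃ i, IsPosSprig (G.moveLeft i) ∨ IsStarLike (G.moveLeft i)) ∧
      (∀ i, G.moveLeft i = 0 ∨ IsPosSprig (G.moveLeft i) ∨ IsStarLike (G.moveLeft i)) ∧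
      ∀ j, G.moveRight j = 0 ∨ IsPosSprig (G.moveRight j) := by
  cases G; rfl

theorem isStarLike_star : IsStarLike PGame.star :=
  ⟨⟨()⟩, ⟨()⟩, fun _ => rfl, fun _ => rfl⟩

theorem IsStarLike.neg {G : PG} (h : IsStarLike G) : IsStarLike (-G) := by
  cases G
  obtain ⟨hl, hr, hL, hR⟩ := h
  exact ⟨hr, hl, fun j => (congrArg _ (hR j)).trans neg_zero,
    fun i => (congrArg _ (hL i)).trans neg_zero⟩

inductive Kind : Type
  | pos | neg | star
deriving DecidableEq

def Kind.swap : Kind → Kind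
  | pos => neg
  | neg => pos
  | star => star

theorem Kind.swap_swap (k : Kind) : k.swap.swap = k := by
  cases k <;> rfl

theorem Kind.count_map_swap (m : Multiset Kind) (k : Kind) :
    (m.map swap).count k = m.count k.swap := by
  conv_lhs => rw [← k.swap_swap]
  exact Multiset.count_map_eq_count' _ _ (Function.LeftInverse.injective swap_swap) _

def IsComponent : Kind → PG → Prop
  | .pos, G => IsPosSprig G
  | .neg, G => ∃ H, IsPosSprig H ∧ G = -H
  | .star, G => IsStarLike G

/-- `r` is the multiset of kinds that a Right move in a component of kind `k` leaves behind. -/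
def Kind.RightOption : Kind → Multiset Kind → Prop
  | pos, r => r = 0 ∨ r = {pos}
  | neg, r => r = 0 ∨ r = {neg} ∨ r = {star}
  | star, r => r = 0

inductive IsSprigSum : Multiset Kind → PG → Prop
  | zero : IsSprigSum 0 0
  | component {k : Kind} {G : PG} : IsComponent k G → IsSprigSum {k} G
  | add {m₁ m₂ : Multiset Kind} {G H : PG} :
      IsSprigSum m₁ G → IsSprigSum m₂ H → IsSprigSum (m₁ + m₂) (G + H)

namespace IsComponent

variable {k : Kind} {G : PG}

theorem neg (h : IsComponent k G) : IsComponent k.swap (-G) := by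
  cases k with
  | pos => exact ⟨G, h, rfl⟩
  | neg => obtain ⟨H, hH, rfl⟩ := h; exact (neg_neg H).symm ▸ hH
  | star => exact IsStarLike.neg h

theorem exists_moveLeft_eq_zero (h : IsComponent k G) : ∃ i, G.moveLeft i = 0 := by
  cases k with
  | pos => exact (isPosSprig_iff.1 h).1
  | neg =>
    obtain ⟨⟨_, _, _, R⟩, hH, rfl⟩ := h
    obtain ⟨-, ⟨j, hj⟩, -, -, -⟩ := isPosSprig_iff.1 hH
    exact ⟨j, (congrArg _ hj).trans neg_zero⟩
  | star => exact ⟨h.1.some, h.2.2.1 _⟩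

theorem moveRight (h : IsComponent k G) (j : G.RightMoves) :
    ∃ r, k.RightOption r ∧ IsSprigSum r (G.moveRight j) := by
  cases k with
  | pos =>
    obtain ⟨-, -, -, -, hR⟩ := isPosSprig_iff.1 h
    rcases hR j with h0 | hp
    exacts [⟨0, Or.inl rfl, h0 ▸ .zero⟩, ⟨{.pos}, Or.inr rfl, .component (k := .pos) hp⟩]
  | neg =>
    obtain ⟨⟨_, _, L, _⟩, hH, rfl⟩ := h
    change ∃ r, _ ∧ IsSprigSum r (-L j)
    obtain ⟨-, -, -, hL, -⟩ := isPosSprig_iff.1 hH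
    rcases hL j with h0 | hp | hs
    · exact ⟨0, Or.inl rfl, ((congrArg _ h0).trans neg_zero).symm ▸ .zero⟩
    · exact ⟨{.neg}, Or.inr (Or.inl rfl), .component (k := .neg) ⟨L j, hp, rfl⟩⟩
    · exact ⟨{.star}, Or.inr (Or.inr rfl), .component (k := .star) hs.neg⟩
  | star => exact ⟨0, rfl, h.2.2.2 j ▸ .zero⟩

end IsComponent

namespace IsSprigSum

variable {m : Multiset Kind} {G : PG}

theorem neg (h : IsSprigSum m G) : IsSprigSum (m.map Kind.swap) (-G) := by
  induction h with
  | zero => exact neg_zero.symm ▸ zero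
  | component hC => exact component hC.neg
  | add _ _ ih₁ ih₂ => exact Multiset.map_add .. ▸ neg_add .. ▸ add ih₁ ih₂

theorem exists_moveLeft {k : Kind} {R : Multiset Kind → Prop} (h : IsSprigSum m G) (hk : k ∈ m)
    (hR : ∀ C, IsComponent k C → ∃ i r, R r ∧ IsSprigSum r (C.moveLeft i)) :
    ∃ i r, R r ∧ IsSprigSum (m.erase k + r) (G.moveLeft i) := by
  induction h with
  | zero => exact absurd hk (Multiset.notMem_zero k)
  | @component k' C hC =>
    obtain rfl := Multiset.mem_singleton.1 hk
    simpa using hR C hC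
  | @add m₁ m₂ G H h₁ h₂ ih₁ ih₂ =>
    rcases Multiset.mem_add.1 hk with hk₁ | hk₂
    · obtain ⟨i, r, hr, hG⟩ := ih₁ hk₁
      obtain ⟨i', hi'⟩ := exists_moveLeft_add_left H i
      refine ⟨i', r, hr, hi' ▸ ?_⟩
      rw [Multiset.erase_add_left_pos _ hk₁, add_right_comm]
      exact add hG h₂
    · obtain ⟨i, r, hr, hH⟩ := ih₂ hk₂
      obtain ⟨i', hi'⟩ := exists_moveLeft_add_right G i
      refine ⟨i', r, hr, hi' ▸ ?_⟩
      rw [Multiset.erase_add_right_pos _ hk₂, add_assoc]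
      exact add h₁ hH

theorem moveRight (h : IsSprigSum m G) (j : G.RightMoves) :
    ∃ k ∈ m, ∃ r, k.RightOption r ∧ IsSprigSum (m.erase k + r) (G.moveRight j) := by
  induction h with
  | zero => exact PEmpty.elim j
  | @component k C hC =>
    obtain ⟨r, hr, hC'⟩ := hC.moveRight j
    exact ⟨k, Multiset.mem_singleton_self k, r, hr, by simpa using hC'⟩
  | @add m₁ m₂ G H h₁ h₂ ih₁ ih₂ =>
    rcases moveRight_add_cases j with ⟨j, hj⟩ | ⟨j, hj⟩ <;> rw [hj]
    · obtain ⟨k, hk, r, hr, hG⟩ := ih₁ j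
      refine ⟨k, Multiset.mem_add.2 (Or.inl hk), r, hr, ?_⟩
      rw [Multiset.erase_add_left_pos _ hk, add_right_comm]
      exact add hG h₂
    · obtain ⟨k, hk, r, hr, hH⟩ := ih₂ j
      refine ⟨k, Multiset.mem_add.2 (Or.inr hk), r, hr, ?_⟩
      rw [Multiset.erase_add_right_pos _ hk, add_assoc]
      exact add h₁ hH

end IsSprigSum

def LeftWinsSecond (m : Multiset Kind) : Prop :=
  m.count .neg + 2 ≤ m.count .pos ∨
    (m.count .pos = m.count .neg + 1 ∧ Even (m.count .pos + m.count .neg + m.count .star)) ∨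
    (m.count .pos = 0 ∧ m.count .neg = 0 ∧ Even (m.count .star))

def LeftWinsFirst (m : Multiset Kind) : Prop :=
  m.count .neg + 1 ≤ m.count .pos ∨
    (m.count .pos = m.count .neg ∧ Odd (m.count .pos + m.count .neg + m.count .star))

theorem LeftWinsSecond.leftWinsFirst_erase_add {m r : Multiset Kind} {k : Kind}
    (h : LeftWinsSecond m) (hk : k ∈ m) (hr : k.RightOption r) :
    LeftWinsFirst (m.erase k + r) := by
  rw [← Multiset.count_pos] at hk
  unfold LeftWinsSecond LeftWinsFirst at *
  simp only [Nat.even_iff, Nat.odd_iff] at h ⊢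
  cases k <;> simp only [Kind.RightOption] at hr <;> rcases hr with rfl | rfl | rfl <;>
    simp only [Multiset.count_add, Multiset.count_erase_self, Multiset.count_erase_of_ne, ne_eq,
      reduceCtorEq, not_false_eq_true, Multiset.count_singleton, Multiset.count_zero, if_true,
      if_false] <;> omega

/-- Left's strategy: kill a negated sprig if there is one; otherwise kill a positive sprig
when the number of components is odd and move one to `*:xᴸ` when it is even; failing both,
kill a star. -/
theorem LeftWinsFirst.exists_leftWinsSecond {m : Multiset Kind} (h : LeftWinsFirst m) :
    (∃ k ∈ m, LeftWinsSecond (m.erase k)) ∨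
      (Kind.pos ∈ m ∧ ∀ r, (r = {.pos} ∨ r = {.star}) → LeftWinsSecond (m.erase .pos + r)) := by
  unfold LeftWinsFirst LeftWinsSecond at *
  simp only [← Multiset.count_pos, Nat.even_iff, Nat.odd_iff] at h ⊢
  by_cases hn : 0 < m.count .neg
  · refine Or.inl ⟨.neg, hn, ?_⟩
    simp only [Multiset.count_erase_self, Multiset.count_erase_of_ne, ne_eq, reduceCtorEq,
      not_false_eq_true]
    omega
  by_cases hp : 0 < m.count .pos
  · by_cases hodd : (m.count .pos + m.count .neg + m.count .star) % 2 = 1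
    · refine Or.inl ⟨.pos, hp, ?_⟩
      simp only [Multiset.count_erase_self, Multiset.count_erase_of_ne, ne_eq, reduceCtorEq,
        not_false_eq_true]
      omega
    · refine Or.inr ⟨hp, ?_⟩
      rintro r (rfl | rfl) <;>
        simp only [Multiset.count_add, Multiset.count_erase_self, Multiset.count_erase_of_ne,
          ne_eq, reduceCtorEq, not_false_eq_true, Multiset.count_singleton, if_true,
          if_false] <;> omega
  · refine Or.inl ⟨.star, by omega, ?_⟩
    simp only [Multiset.count_erase_self, Multiset.count_erase_of_ne, ne_eq, reduceCtorEq,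
      not_false_eq_true]
    omega

theorem IsSprigSum.zero_le_and_not_le_zero (G : PG) :
    ∀ {m}, IsSprigSum m G → (LeftWinsSecond m → 0 ≤ G) ∧ (LeftWinsFirst m → ¬ G ≤ 0) := by
  induction G with | mk xl xr xL xR ihL ihR => ?_
  intro m hG
  refine ⟨fun h => zero_le_iff.2 fun j => ?_, fun h => not_le_zero_iff.2 ?_⟩
  · obtain ⟨k, hk, r, hr, hG'⟩ := hG.moveRight j
    exact (ihR j hG').2 (h.leftWinsFirst_erase_add hk hr)
  rcases h.exists_leftWinsSecond with ⟨k, hk, hwin⟩ | ⟨hk, hwin⟩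
  · obtain ⟨i, r, rfl, hG'⟩ := hG.exists_moveLeft hk (R := (· = 0)) fun C hC =>
      let ⟨i, hi⟩ := hC.exists_moveLeft_eq_zero
      ⟨i, 0, rfl, hi ▸ .zero⟩
    exact ⟨i, (ihL i (add_zero (m.erase k) ▸ hG')).1 hwin⟩
  · obtain ⟨i, r, hr, hG'⟩ := hG.exists_moveLeft hk (R := fun r => r = {.pos} ∨ r = {.star})
      fun C hC => by
        obtain ⟨-, -, ⟨i, hp | hs⟩, -, -⟩ := isPosSprig_iff.1 hC
        exacts [⟨i, _, Or.inl rfl, .component (k := .pos) hp⟩,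
          ⟨i, _, Or.inr rfl, .component (k := .star) hs⟩]
    exact ⟨i, (ihL i hG').1 (hwin r hr)⟩

theorem IsSprigSum.outcome {m : Multiset Kind} {G : PG} (hG : IsSprigSum m G)
    (hs : Odd (m.count .star)) :
    (m.count .neg < m.count .pos → 0 < G) ∧ (m.count .pos = m.count .neg → Fuzzy G 0) ∧
      (m.count .pos < m.count .neg → G < 0) := by
  have hG' := hG.neg.zero_le_and_not_le_zero
  rw [zero_le_neg_iff, neg_le_zero_iff] at hG'
  have hG := hG.zero_le_and_not_le_zero
  unfold LeftWinsSecond LeftWinsFirst at hG hG'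
  simp only [Kind.count_map_swap, Kind.swap, Nat.even_iff, Nat.odd_iff] at hs hG hG'
  exact ⟨fun h => ⟨hG.1 (by omega), hG.2 (by omega)⟩,
    fun h => ⟨hG'.2 (by omega), hG.2 (by omega)⟩, fun h => ⟨hG'.1 (by omega), hG'.2 (by omega)⟩⟩

theorem neg_ordSum_star (H : PG) : -ordSum PGame.star H = ordSum PGame.star (-H) := by
  induction H with
  | mk α β L R ihL ihR =>
    refine congrArg₂ (PGame.mk _ _) (funext ?_) (funext ?_)
    · rintro (_ | b)
      exacts [neg_zero, ihR b]
    · rintro (_ | a)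
      exacts [neg_zero, ihL a]

theorem sprigNeg_eq_neg_sprig (q : ℚ) : sprigNeg q = -sprig q :=
  (neg_ordSum_star _).symm

theorem isStarLike_ordSum_star_natGame_zero : IsStarLike (ordSum PGame.star (natGame 0)) :=
  ⟨⟨.inl ()⟩, ⟨.inl ()⟩, by rintro (_ | ⟨⟨⟩⟩); rfl, by rintro (_ | ⟨⟨⟩⟩); rfl⟩

theorem isPosSprig_ordSum_star {H : PG} (hH : Nonempty H.LeftMoves)
    (hL : ∀ i, IsPosSprig (ordSum PGame.star (H.moveLeft i)) ∨
      IsStarLike (ordSum PGame.star (H.moveLeft i)))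
    (hR : ∀ j, IsPosSprig (ordSum PGame.star (H.moveRight j))) :
    IsPosSprig (ordSum PGame.star H) := by
  cases H
  obtain ⟨i⟩ := hH
  refine ⟨⟨.inl (), rfl⟩, ⟨.inl (), rfl⟩, ⟨.inr i, hL i⟩, ?_, ?_⟩
  · rintro (_ | a)
    exacts [Or.inl rfl, Or.inr (hL a)]
  · rintro (_ | b)
    exacts [Or.inl rfl, Or.inr (hR b)]

theorem isPosSprig_ordSum_star_natGame_succ (n : ℕ) :
    IsPosSprig (ordSum PGame.star (natGame (n + 1))) := by
  induction n with
  | zero =>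
    exact isPosSprig_ordSum_star ⟨()⟩ (fun _ => Or.inr isStarLike_ordSum_star_natGame_zero)
      (fun j => PEmpty.elim j)
  | succ n ih => exact isPosSprig_ordSum_star ⟨()⟩ (fun _ => Or.inl ih) (fun j => PEmpty.elim j)

theorem dGame_zero (n : ℕ) : dGame n 0 = natGame 0 := by
  induction n with
  | zero => rfl
  | succ n ih => simpa [dGame] using ih

theorem isPosSprig_ordSum_star_dGame (n : ℕ) :
    ∀ m : ℤ, 0 < m → IsPosSprig (ordSum PGame.star (dGame n m)) := by
  induction n with
  | zero =>
    intro m hm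
    obtain ⟨k, hk⟩ : ∃ k, m.toNat = k + 1 := ⟨m.toNat - 1, by omega⟩
    rw [show dGame 0 m = natGame m.toNat from if_pos hm.le, hk]
    exact isPosSprig_ordSum_star_natGame_succ k
  | succ n ih =>
    intro m hm
    by_cases he : m % 2 = 0
    · simpa [dGame, he] using ih (m / 2) (by omega)
    simp only [dGame, he, if_false]
    refine isPosSprig_ordSum_star ⟨()⟩ (fun _ => ?_) (fun _ => ih _ (by omega))
    by_cases hl : (m - 1) / 2 = 0
    · rw [hl, dGame_zero]
      exact Or.inr isStarLike_ordSum_star_natGame_zero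
    · exact Or.inl (ih _ (by omega))

theorem isPosSprig_sprig {q : ℚ} (hq : 0 < q) : IsPosSprig (sprig q) :=
  isPosSprig_ordSum_star_dGame _ _ (Rat.num_pos.2 hq)

theorem IsSprigSum.foldr_add {k : Kind} {m : Multiset Kind} {H : PG} (hH : IsSprigSum m H) :
    ∀ {l : List PG}, (∀ G ∈ l, IsComponent k G) →
      IsSprigSum (.replicate l.length k + m) (l.foldr (· + ·) H)
  | [], _ => by simpa using hH
  | G :: l, hl => by
    rw [List.length_cons, Multiset.replicate_succ, Multiset.cons_add, ← Multiset.singleton_add]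
    exact .add (.component (hl G List.mem_cons_self))
      (foldr_add hH fun G' hG' => hl G' (List.mem_cons_of_mem _ hG'))

theorem isSprigSum_sprigsGame {X Y : List ℚ} (hX : ∀ q ∈ X, 0 < q) (hY : ∀ q ∈ Y, 0 < q) :
    IsSprigSum (.replicate X.length .pos + (.replicate Y.length .neg + 0)) (sprigsGame X Y) := by
  rw [sprigsGame, listSum, List.foldr_append, ← List.length_map (f := sprig),
    ← List.length_map (f := sprigNeg)]
  refine IsSprigSum.foldr_add (IsSprigSum.foldr_add .zero ?_) ?_
  · simp only [List.mem_map]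
    rintro _ ⟨q, hq, rfl⟩
    exact ⟨sprig q, isPosSprig_sprig (hY q hq), sprigNeg_eq_neg_sprig q⟩
  · simp only [List.mem_map]
    rintro _ ⟨q, hq, rfl⟩
    exact isPosSprig_sprig (hX q hq)

/-- In normal play `(X, Y) + *` is `> 0`, fuzzy with `0`, or `< 0`
according as `|X| > |Y|`, `|X| = |Y|`, `|X| < |Y|`. -/
theorem stmt13 (X Y : List ℚ)
    (hX : ∀ q ∈ X, 0 < q ∧ IsDyadic q) (hY : ∀ q ∈ Y, 0 < q ∧ IsDyadic q) :
    (Y.length < X.length → 0 < sprigsGame X Y + PGame.star) ∧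
    (X.length = Y.length → PGame.Fuzzy (sprigsGame X Y + PGame.star) 0) ∧
    (X.length < Y.length → sprigsGame X Y + PGame.star < 0) := by
  have hG := (isSprigSum_sprigsGame (fun q hq => (hX q hq).1) (fun q hq => (hY q hq).1)).add
    (.component (k := .star) isStarLike_star)
  simpa [Multiset.count_replicate] using hG.outcome (by simp [Multiset.count_replicate])

end Sprigs
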